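/- Let E be the exterior algebra over ℂ on generators e₁,…,e₆ and let T = {{1,2,4},{1,3,5},{2,3,6},{4,5,6}} (the triangles of the complete graph K₄ with all positive edges, where edge labels 1..6 correspond to the edges of K₄). Then the span of the 12 elements e_t ∧ ∂e_S for S ∈ T, t ∈ [6]∖S has dimension 10 inside E³. -/

import Mathlib

/-!
Ten of the twelve elements `e_t ∧ ∂e_S` are linearly independent: they can be ordered so that
each involves a monomial `e_a ∧ e_b ∧ e_c` absent from all earlier ones, so the corresponding
`3 × 3` minors, which are the coordinate functionals of these monomials, pair with them in a
triangular matrix with nonzero diagonal. The remaining two, `gen 1 * bdry 3 4 5` and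
`gen 2 * bdry 3 4 5`, are integer combinations of those ten.
-/

open ExteriorAlgebra

/-- The standard generator `e i` of the exterior algebra `Λ(ℂ^6)`. -/
noncomputable def gen (i : Fin 6) : ExteriorAlgebra ℂ (Fin 6 → ℂ) :=
  ι ℂ (Pi.single i (1 : ℂ))

/-- `∂e_{ijk} = e_j ∧ e_k - e_i ∧ e_k + e_i ∧ e_j`. -/
noncomputable def bdry (i j k : Fin 6) : ExteriorAlgebra ℂ (Fin 6 → ℂ) :=
  gen j * gen k - gen i * gen k + gen i * gen j

/-- The triangles (3-cycles) of the complete graph `K₄` with all positive edges, with edge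
labels 1,…,6 relabelled 0,…,5: `{1,2,4}, {1,3,5}, {2,3,6}, {4,5,6}`. -/
def triangles : List (Fin 6 × Fin 6 × Fin 6) := [(0, 1, 3), (0, 2, 4), (1, 2, 5), (3, 4, 5)]

section MinorForm

variable {R σ : Type*} [CommRing R] {k : ℕ}

noncomputable def minorForm (s : Fin k → σ) : ExteriorAlgebra R (σ → R) →ₗ[R] R :=
  liftAlternating (Pi.single k (Matrix.detRowAlternating.compLinearMap (LinearMap.funLeft R R s)))

theorem minorForm_ιMulti (s : Fin k → σ) (v : Fin k → σ → R) :
    minorForm s (ιMulti R k v) = (Matrix.of fun i j => v i (s j)).det := by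
  rw [minorForm, liftAlternating_apply_ιMulti, Pi.single_eq_same]
  rfl

theorem minorForm_ι_mul_ι_mul_ι (s : Fin 3 → σ) (x y z : σ → R) :
    minorForm s (ι R x * (ι R y * ι R z)) = (Matrix.of ![x ∘ s, y ∘ s, z ∘ s]).det := by
  have hprod : ι R x * (ι R y * ι R z) = ιMulti R 3 ![x, y, z] := by simp [ιMulti_apply]
  rw [hprod, minorForm_ιMulti]
  congr
  ext i j
  fin_cases i <;> rfl

end MinorForm

theorem LinearIndependent.of_dual_lowerTriangular {R M ι : Type*} [CommRing R] [IsDomain R]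
    [AddCommGroup M] [Module R M] [Fintype ι] [LinearOrder ι] {v : ι → M}
    (f : ι → Module.Dual R M) (hlower : ∀ i j, i < j → f j (v i) = 0)
    (hdiag : ∀ i, f i (v i) ≠ 0) : LinearIndependent R v := by
  let A : Matrix ι ι R := .of fun i j => f j (v i)
  have hA : A.IsLowerTriangular := hlower
  have hdet : A.det ≠ 0 := by
    rw [Matrix.det_of_isLowerTriangular A hA]
    exact Finset.prod_ne_zero_iff.mpr fun i _ => hdiag i
  exact .of_comp (LinearMap.pi f) (Matrix.linearIndependent_rows_of_det_ne_zero hdet)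

theorem gen_mul_gen_of_lt {i j : Fin 6} (_h : j < i) : gen i * gen j = -(gen j * gen i) :=
  eq_neg_of_add_eq_zero_left (ι_add_mul_swap _ _)

theorem gen_mul_gen_mul_of_lt {i j : Fin 6} (h : j < i) (x : ExteriorAlgebra ℂ (Fin 6 → ℂ)) :
    gen i * (gen j * x) = -(gen j * (gen i * x)) := by
  rw [← mul_assoc, ← mul_assoc, gen_mul_gen_of_lt h, neg_mul]

def generators : Set (ExteriorAlgebra ℂ (Fin 6 → ℂ)) :=
  {x | ∃ p ∈ triangles, ∃ t : Fin 6, t ∉ ({p.1, p.2.1, p.2.2} : Finset (Fin 6)) ∧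
    x = gen t * bdry p.1 p.2.1 p.2.2}

def basisLabel : Fin 10 → Fin 6 × Fin 6 × Fin 6 × Fin 6 :=
  ![(0, 1, 2, 5), (2, 0, 1, 3), (5, 0, 1, 3), (1, 0, 2, 4), (5, 0, 2, 4), (0, 3, 4, 5),
    (4, 0, 1, 3), (3, 0, 2, 4), (3, 1, 2, 5), (4, 1, 2, 5)]

noncomputable def basisElem (i : Fin 10) : ExteriorAlgebra ℂ (Fin 6 → ℂ) :=
  gen (basisLabel i).1 * bdry (basisLabel i).2.1 (basisLabel i).2.2.1 (basisLabel i).2.2.2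

-- `e_{pivot j}` occurs in `basisElem j` but in no `basisElem i` with `i < j`.
def pivot : Fin 10 → Fin 3 → Fin 6 :=
  ![![0, 1, 2], ![1, 2, 3], ![1, 3, 5], ![1, 2, 4], ![2, 4, 5], ![0, 3, 4], ![1, 3, 4],
    ![2, 3, 4], ![2, 3, 5], ![1, 4, 5]]

theorem linearIndependent_basisElem : LinearIndependent ℂ basisElem := by
  refine .of_dual_lowerTriangular (fun j => minorForm (pivot j)) (fun i j hij => ?_) fun i => ?_
  · fin_cases i <;> fin_cases j <;>
      simp_all [basisElem, basisLabel, pivot, bdry, gen, mul_add, mul_sub,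
        minorForm_ι_mul_ι_mul_ι, Matrix.det_fin_three]
  · fin_cases i <;>
      simp [basisElem, basisLabel, pivot, bdry, gen, mul_add, mul_sub, minorForm_ι_mul_ι_mul_ι,
        Matrix.det_fin_three]

theorem gen_one_mul_bdry_mem_span :
    gen 1 * bdry 3 4 5 ∈ Submodule.span ℂ (Set.range basisElem) :=
  (Submodule.mem_span_range_iff_exists_fun ℂ).mpr ⟨![-1, 0, -1, -1, 1, 1, 1, 0, 0, 1], by
    simp only [Fin.sum_univ_succ, Fin.sum_univ_zero, Matrix.cons_val_zero, Matrix.cons_val_succ,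
      basisElem, basisLabel, bdry, mul_add, mul_sub, mul_neg, neg_neg, Fin.reduceLT,
      gen_mul_gen_of_lt, gen_mul_gen_mul_of_lt]
    module⟩

theorem gen_two_mul_bdry_mem_span :
    gen 2 * bdry 3 4 5 ∈ Submodule.span ℂ (Set.range basisElem) :=
  (Submodule.mem_span_range_iff_exists_fun ℂ).mpr ⟨![-1, 1, -1, 0, 1, 1, 0, -1, 1, 0], by
    simp only [Fin.sum_univ_succ, Fin.sum_univ_zero, Matrix.cons_val_zero, Matrix.cons_val_succ,
      basisElem, basisLabel, bdry, mul_add, mul_sub, mul_neg, neg_neg, Fin.reduceLT,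
      gen_mul_gen_of_lt, gen_mul_gen_mul_of_lt]
    module⟩

theorem basisElem_mem_generators (i : Fin 10) : basisElem i ∈ generators :=
  ⟨(basisLabel i).2, by revert i; decide, (basisLabel i).1, by revert i; decide, rfl⟩

theorem generator_label_cases :
    ∀ p ∈ triangles, ∀ t : Fin 6, t ∉ ({p.1, p.2.1, p.2.2} : Finset (Fin 6)) →
      (∃ i, basisLabel i = (t, p)) ∨ (t, p) = (1, 3, 4, 5) ∨ (t, p) = (2, 3, 4, 5) := by
  decide

theorem span_generators :
    Submodule.span ℂ generators = Submodule.span ℂ (Set.range basisElem) := by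
  apply le_antisymm
  · rw [Submodule.span_le]
    rintro x ⟨p, hp, t, ht, rfl⟩
    rcases generator_label_cases p hp t ht with ⟨i, hi⟩ | h | h
    · exact Submodule.subset_span ⟨i, by simp [basisElem, hi]⟩
    · obtain ⟨rfl, rfl⟩ := Prod.mk.inj h
      exact gen_one_mul_bdry_mem_span
    · obtain ⟨rfl, rfl⟩ := Prod.mk.inj h
      exact gen_two_mul_bdry_mem_span
  · exact Submodule.span_mono (Set.range_subset_iff.mpr basisElem_mem_generators)

/-- For the graph `K₄`, the span of the 12 elements `e_t ∧ ∂e_S`, for `S` a triangle of `K₄`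
and `t ∉ S`, has dimension `10` inside `E³`. -/
theorem dim_span_F3_K4 :
    Module.finrank ℂ (Submodule.span ℂ
      {x : ExteriorAlgebra ℂ (Fin 6 → ℂ) |
        ∃ p ∈ triangles, ∃ t : Fin 6, t ∉ ({p.1, p.2.1, p.2.2} : Finset (Fin 6)) ∧
          x = gen t * bdry p.1 p.2.1 p.2.2}) = 10 := by
  rw [← generators, span_generators, finrank_span_eq_card linearIndependent_basisElem,
    Fintype.card_fin]
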